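/- Suppose MSE(h,w) = C₁h⁴ + C₂w⁸ + C₃/(n w^{d−1} h) with positive constants C₁, C₂, C₃ and 1 ≤ d ≤ 8. Then the choice w ≍ n^{−1/(9+d)}, h ≍ n^{−2/(9+d)} yields MSE ≍ n^{−8/(9+d)}, and no choice of (h,w) with h,w > 0 achieves a smaller order: inf_{h,w>0} (C₁h⁴ + C₂w⁸ + C₃/(n w^{d−1}h)) ≥ c·n^{−8/(9+d)} for some c > 0 depending only on C₁,C₂,C₃,d. -/
import Mathlib


/-- Rate optimization: for `MSE(h,w) = C₁h⁴ + C₂w⁸ + C₃/(n w^{d−1} h)` with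
`1 ≤ d ≤ 8`, the choice `w = n^{−1/(9+d)}`, `h = n^{−2/(9+d)}` gives
`MSE ≤ K n^{−8/(9+d)}`, and no positive `(h,w)` beats this order:
`MSE(h,w) ≥ c n^{−8/(9+d)}` for some `c > 0`. -/
theorem mse_rate_optimality
    {d : ℕ} (hd1 : 1 ≤ d) (hd8 : d ≤ 8) (C₁ C₂ C₃ : ℝ)
    (hC₁ : 0 < C₁) (hC₂ : 0 < C₂) (hC₃ : 0 < C₃) :
    (∃ K > (0 : ℝ), ∀ n : ℝ, 0 < n →
      C₁ * (n ^ (-(2 : ℝ) / (9 + d))) ^ 4 + C₂ * (n ^ (-(1 : ℝ) / (9 + d))) ^ 8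
        + C₃ / (n * (n ^ (-(1 : ℝ) / (9 + d))) ^ (d - 1) * n ^ (-(2 : ℝ) / (9 + d)))
        ≤ K * n ^ (-(8 : ℝ) / (9 + d))) ∧
    (∃ c > (0 : ℝ), ∀ n : ℝ, 0 < n → ∀ h w : ℝ, 0 < h → 0 < w →
      c * n ^ (-(8 : ℝ) / (9 + d))
        ≤ C₁ * h ^ 4 + C₂ * w ^ 8 + C₃ / (n * w ^ (d - 1) * h)) := by
  have hDpos : (0:ℝ) < 9 + (d:ℕ) := by positivity
  set D : ℝ := 9 + (d:ℕ) with hDdef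
  have hDne : D ≠ 0 := ne_of_gt hDpos
  have hcast : ((d - 1 : ℕ) : ℝ) = (d : ℝ) - 1 := by
    push_cast [hd1]; ring
  constructor
  · -- upper bound
    refine ⟨C₁ + C₂ + C₃, by positivity, fun n hn => ?_⟩
    have hk : ∀ (p : ℝ) (k : ℕ), (n ^ p) ^ k = n ^ (p * k) := by
      intro p k
      rw [← Real.rpow_natCast (n ^ p) k, ← Real.rpow_mul hn.le]
    have h1 : (n ^ (-(2:ℝ)/D)) ^ 4 = n ^ (-(8:ℝ)/D) := by
      rw [hk]; congr 1; push_cast; ring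
    have h2 : (n ^ (-(1:ℝ)/D)) ^ 8 = n ^ (-(8:ℝ)/D) := by
      rw [hk]; congr 1; push_cast; ring
    have h3 : n * (n ^ (-(1:ℝ)/D)) ^ (d-1) * n ^ (-(2:ℝ)/D) = n ^ ((8:ℝ)/D) := by
      rw [hk]
      nth_rewrite 1 [← Real.rpow_one n]
      rw [← Real.rpow_add hn, ← Real.rpow_add hn]
      congr 1
      rw [hcast]
      field_simp
      ring
    rw [h1, h2, h3]
    have h4 : C₃ / n ^ ((8:ℝ)/D) = C₃ * n ^ (-(8:ℝ)/D) := by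
      rw [neg_div, Real.rpow_neg hn.le, div_eq_mul_inv]
    rw [h4]
    apply le_of_eq
    ring
  · -- lower bound
    set α : ℝ := 2 / D with hα
    set β : ℝ := ((d:ℝ) - 1) / D with hβ
    set γ : ℝ := 8 / D with hγ
    have hα0 : 0 ≤ α := by positivity
    have hβ0 : 0 ≤ β := by
      have : (1:ℝ) ≤ (d:ℝ) := by exact_mod_cast hd1
      have h2 : (0:ℝ) ≤ (d:ℝ) - 1 := by linarith
      positivity
    have hγ0 : 0 ≤ γ := by positivity
    have hsum : α + β + γ = 1 := by
      rw [hα, hβ, hγ]; field_simp; ring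
    refine ⟨C₁ ^ α * C₂ ^ β * C₃ ^ γ, by positivity, fun n hn h w hh hw => ?_⟩
    have hx : (0:ℝ) < C₁ * h ^ 4 := by positivity
    have hy : (0:ℝ) < C₂ * w ^ 8 := by positivity
    have hz : (0:ℝ) < C₃ / (n * w ^ (d-1) * h) := by positivity
    -- key equality via logs
    have key : C₁ ^ α * C₂ ^ β * C₃ ^ γ * n ^ (-(8:ℝ)/D)
        = (C₁ * h ^ 4) ^ α * (C₂ * w ^ 8) ^ β * (C₃ / (n * w ^ (d-1) * h)) ^ γ := by
      have hl : (0:ℝ) < C₁ ^ α * C₂ ^ β * C₃ ^ γ * n ^ (-(8:ℝ)/D) := by positivity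
      have hr : (0:ℝ) < (C₁ * h ^ 4) ^ α * (C₂ * w ^ 8) ^ β * (C₃ / (n * w ^ (d-1) * h)) ^ γ := by
        positivity
      apply Real.log_injOn_pos (Set.mem_Ioi.mpr hl) (Set.mem_Ioi.mpr hr)
      have l1 : Real.log ((C₁ * h ^ 4) ^ α) = α * (Real.log C₁ + 4 * Real.log h) := by
        rw [Real.log_rpow hx, Real.log_mul (ne_of_gt hC₁) (by positivity), Real.log_pow]
        norm_num
      have l2 : Real.log ((C₂ * w ^ 8) ^ β) = β * (Real.log C₂ + 8 * Real.log w) := by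
        rw [Real.log_rpow hy, Real.log_mul (ne_of_gt hC₂) (by positivity), Real.log_pow]
        norm_num
      have l3 : Real.log ((C₃ / (n * w ^ (d-1) * h)) ^ γ)
          = γ * (Real.log C₃ - (Real.log n + ((d:ℝ) - 1) * Real.log w + Real.log h)) := by
        rw [Real.log_rpow hz, Real.log_div (ne_of_gt hC₃) (by positivity),
          Real.log_mul (by positivity) (ne_of_gt hh), Real.log_mul (ne_of_gt hn) (by positivity),
          Real.log_pow, hcast]
      rw [Real.log_mul (by positivity) (by positivity), Real.log_mul (by positivity) (by positivity),
        Real.log_mul (by positivity) (by positivity), Real.log_mul (by positivity) (by positivity),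
        Real.log_mul (by positivity) (by positivity),
        l1, l2, l3, Real.log_rpow hC₁, Real.log_rpow hC₂, Real.log_rpow hC₃, Real.log_rpow hn,
        hα, hβ, hγ]
      field_simp
      ring
    rw [key]
    calc (C₁ * h ^ 4) ^ α * (C₂ * w ^ 8) ^ β * (C₃ / (n * w ^ (d-1) * h)) ^ γ
        ≤ α * (C₁ * h ^ 4) + β * (C₂ * w ^ 8) + γ * (C₃ / (n * w ^ (d-1) * h)) :=
          Real.geom_mean_le_arith_mean3_weighted hα0 hβ0 hγ0 hx.le hy.le hz.le hsum
      _ ≤ C₁ * h ^ 4 + C₂ * w ^ 8 + C₃ / (n * w ^ (d-1) * h) := by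
          have hα1 : α ≤ 1 := by nlinarith
          have hβ1 : β ≤ 1 := by nlinarith
          have hγ1 : γ ≤ 1 := by nlinarith
          nlinarith [hx.le, hy.le, hz.le, mul_le_of_le_one_left hx.le hα1,
            mul_le_of_le_one_left hy.le hβ1, mul_le_of_le_one_left hz.le hγ1]
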